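/- Let u = a·w and v = b·w for some nonzero w ∈ ℤ² and coprime positive integers a, b both odd. Then for F = {{0,u}, {0,v}} in ℤ², π(F) = 1/2. -/
import Mathlib

/-- A shooting pattern `X` hits a ship `S` in `ℤ²` if every translate of `S` intersects `X`. -/
def Hits2 (X S : Set (ℤ × ℤ)) : Prop := ∀ n : ℤ × ℤ, ∃ s ∈ S, n + s ∈ X

/-- Lower asymptotic density of a set in `ℤ²`. -/
noncomputable def lowerDensity2 (X : Set (ℤ × ℤ)) : ℝ :=
  Filter.liminf (fun N : ℕ =>
    ((X ∩ Set.Icc (-(N:ℤ), -(N:ℤ)) ((N:ℤ), (N:ℤ))).ncard : ℝ) / (2 * N + 1) ^ 2)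
    Filter.atTop

/-- Optimal piercing density of a family of ships in `ℤ²`. -/
noncomputable def piercing2 (F : Set (Set (ℤ × ℤ))) : ℝ :=
  sInf (lowerDensity2 '' {X | ∀ S ∈ F, Hits2 X S})

open Filter Set

/-- The box `[-N,N]²`. -/
def box2 (N : ℕ) : Set (ℤ × ℤ) := Set.Icc (-(N:ℤ), -(N:ℤ)) ((N:ℤ), (N:ℤ))

noncomputable def ld (X : Set (ℤ × ℤ)) : ℝ :=
  Filter.liminf (fun N : ℕ => ((X ∩ box2 N).ncard : ℝ) / (2 * N + 1) ^ 2) Filter.atTop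

lemma ld_eq (X : Set (ℤ × ℤ)) : lowerDensity2 X = ld X := rfl

lemma box2_finite (N : ℕ) : (box2 N).Finite := Set.finite_Icc _ _

lemma box2_ncard (N : ℕ) : (box2 N).ncard = (2*N+1)^2 := by
  have : box2 N = ↑(Finset.Icc ((-(N:ℤ), -(N:ℤ))) (((N:ℤ), (N:ℤ)))) := by
    simp [box2]
  rw [this, Set.ncard_coe_finset, Finset.Icc_prod_def, Finset.card_product, Int.card_Icc]
  have : ((N:ℤ) + 1 - -(N:ℤ)).toNat = 2*N+1 := by omega
  rw [this]; ring

lemma box2_mono {M N : ℕ} (h : M ≤ N) : box2 M ⊆ box2 N := by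
  apply Set.Icc_subset_Icc <;> simp [Prod.le_def] <;> omega

lemma box2_shift {N R : ℕ} {y u : ℤ × ℤ} (hy : y ∈ box2 N)
    (h1 : u.1.natAbs ≤ R) (h2 : u.2.natAbs ≤ R) : y + u ∈ box2 (N + R) := by
  simp only [box2, Set.mem_Icc, Prod.le_def, Prod.fst_add, Prod.snd_add] at *
  push_cast
  omega

/-- Shift-counting: if adding `u` maps `Y` into `X`, then `Y∩box N` injects into `X∩box (N+R)`. -/
lemma shift_count {X Y : Set (ℤ × ℤ)} {u : ℤ × ℤ} {R : ℕ}
    (h1 : u.1.natAbs ≤ R) (h2 : u.2.natAbs ≤ R) (h : ∀ y ∈ Y, y + u ∈ X) (N : ℕ) :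
    (Y ∩ box2 N).ncard ≤ (X ∩ box2 (N + R)).ncard := by
  have himg : (fun y => y + u) '' (Y ∩ box2 N) ⊆ X ∩ box2 (N + R) := by
    rintro - ⟨y, ⟨hy, hyb⟩, rfl⟩
    exact ⟨h y hy, box2_shift hyb h1 h2⟩
  calc (Y ∩ box2 N).ncard = ((fun y => y + u) '' (Y ∩ box2 N)).ncard :=
        (Set.ncard_image_of_injective _ (add_left_injective u)).symm
    _ ≤ (X ∩ box2 (N + R)).ncard :=
        Set.ncard_le_ncard himg ((box2_finite _).inter_of_right _)

lemma split_count (X : Set (ℤ × ℤ)) (N : ℕ) :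
    (X ∩ box2 N).ncard + (Xᶜ ∩ box2 N).ncard = (2*N+1)^2 := by
  rw [← box2_ncard N, ← Set.ncard_union_eq (by
      exact (disjoint_compl_right.mono inf_le_left inf_le_left))
      ((box2_finite N).inter_of_right _) ((box2_finite N).inter_of_right _)]
  congr 1
  rw [← Set.union_inter_distrib_right, Set.union_compl_self, Set.univ_inter]

/-- Lower bound counting: a set hitting the ship `{0,u}` covers half of large boxes. -/
lemma lower_count {X : Set (ℤ × ℤ)} {u : ℤ × ℤ} {R : ℕ}
    (h1 : u.1.natAbs ≤ R) (h2 : u.2.natAbs ≤ R) (hX : Hits2 X {0, u}) (N : ℕ) :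
    (2*N+1)^2 ≤ 2 * (X ∩ box2 (N + R)).ncard := by
  have hY : ∀ y ∈ Xᶜ, y + u ∈ X := by
    intro y hy
    rcases hX y with ⟨s, hs, hsX⟩
    rcases hs with rfl | rfl
    · exact absurd (by simpa using hsX) hy
    · exact hsX
  have h3 := shift_count h1 h2 hY N
  have h4 : (X ∩ box2 N).ncard ≤ (X ∩ box2 (N+R)).ncard :=
    Set.ncard_le_ncard (Set.inter_subset_inter_right _ (box2_mono (by omega)))
      ((box2_finite _).inter_of_right _)
  have := split_count X N
  omega

/-- Upper bound counting: if adding `u` maps `X` out of `X`, then `X` covers at most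
half of large boxes. -/
lemma upper_count {X : Set (ℤ × ℤ)} {u : ℤ × ℤ} {R : ℕ}
    (h1 : u.1.natAbs ≤ R) (h2 : u.2.natAbs ≤ R) (h : ∀ y ∈ X, y + u ∈ Xᶜ) (N : ℕ) :
    2 * (X ∩ box2 N).ncard ≤ (2*(N+R)+1)^2 := by
  have h3 := shift_count h1 h2 h N
  have h4 : (X ∩ box2 N).ncard ≤ (X ∩ box2 (N+R)).ncard :=
    Set.ncard_le_ncard (Set.inter_subset_inter_right _ (box2_mono (by omega)))
      ((box2_finite _).inter_of_right _)
  have := split_count X (N+R)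
  omega

lemma tendsto_den (R : ℕ) :
    Tendsto (fun M : ℕ => (2*(R:ℝ))/(2*M+1)) atTop (nhds 0) := by
  apply Tendsto.div_atTop (tendsto_const_nhds)
  apply Filter.tendsto_atTop_add_const_right _ 1
  exact (tendsto_natCast_atTop_atTop (R := ℝ)).const_mul_atTop two_pos

lemma r_le_one (X : Set (ℤ × ℤ)) (N : ℕ) :
    ((X ∩ box2 N).ncard : ℝ) / (2 * N + 1) ^ 2 ≤ 1 := by
  have hc : ((X ∩ box2 N).ncard : ℝ) ≤ ((2*N+1)^2 : ℕ) := by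
    exact_mod_cast (Set.ncard_le_ncard (Set.inter_subset_right) (box2_finite N)).trans_eq
      (box2_ncard N)
  have hpos : (0:ℝ) < (2*(N:ℝ)+1)^2 := by positivity
  rw [div_le_one hpos]
  refine hc.trans_eq ?_
  push_cast; ring

lemma density_lower {X : Set (ℤ × ℤ)} {R : ℕ}
    (h : ∀ N : ℕ, (2*N+1)^2 ≤ 2 * (X ∩ box2 (N + R)).ncard) : 1/2 ≤ ld X := by
  set r : ℕ → ℝ := fun N => ((X ∩ box2 N).ncard : ℝ) / (2 * N + 1) ^ 2 with hr
  set g : ℕ → ℝ := fun M => (1 - (2*(R:ℝ))/(2*M+1))^2 / 2 with hg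
  have hgt : Tendsto g atTop (nhds (1/2)) := by
    have := (((tendsto_const_nhds (x := (1:ℝ))).sub (tendsto_den R)).pow 2).div_const 2
    simpa using this
  have hle : ∀ᶠ M in atTop, g M ≤ r M := by
    filter_upwards [eventually_ge_atTop R] with M hM
    have key := h (M - R)
    rw [Nat.sub_add_cancel hM] at key
    have hden : (0:ℝ) < (2*M+1)^2 := by positivity
    have hkey : ((2*(M-R)+1 : ℕ) : ℝ)^2 ≤ 2 * ((X ∩ box2 M).ncard : ℝ) := by
      push_cast
      exact_mod_cast (by exact_mod_cast key : ((2*(M-R)+1)^2 : ℕ) ≤ (2 * (X ∩ box2 M).ncard : ℕ))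
    have hgeq : g M = ((2*(M-R)+1 : ℕ) : ℝ)^2 / (2 * (2*M+1)^2) := by
      have h1 : ((2*(M-R)+1 : ℕ) : ℝ) = 2*(M:ℝ)+1 - 2*R := by
        push_cast [Nat.cast_sub hM]; ring
      have h2 : (2*(M:ℝ)+1) ≠ 0 := by positivity
      simp only [hg]
      rw [h1]
      rw [show (1:ℝ) - 2*R/(2*M+1) = (2*(M:ℝ)+1 - 2*R)/(2*M+1) by field_simp]
      rw [div_pow, div_div, mul_comm ((2 * (M:ℝ) + 1) ^ 2) 2]
    rw [hgeq, hr]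
    rw [div_le_div_iff₀ (by positivity) hden]
    nlinarith [hkey, hden]
  have h1 : (1:ℝ)/2 = liminf g atTop := (hgt.liminf_eq).symm
  rw [h1, ld]
  exact liminf_le_liminf hle (isBoundedUnder_of ⟨0, fun x => by positivity⟩)
    ((isBoundedUnder_of ⟨1, fun N => r_le_one X N⟩).isCoboundedUnder_ge)

lemma density_upper {X : Set (ℤ × ℤ)} {R : ℕ}
    (h : ∀ N : ℕ, 2 * (X ∩ box2 N).ncard ≤ (2*(N+R)+1)^2) : ld X ≤ 1/2 := by
  set r : ℕ → ℝ := fun N => ((X ∩ box2 N).ncard : ℝ) / (2 * N + 1) ^ 2 with hr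
  set g : ℕ → ℝ := fun M => (1 + (2*(R:ℝ))/(2*M+1))^2 / 2 with hg
  have hgt : Tendsto g atTop (nhds (1/2)) := by
    have := (((tendsto_const_nhds (x := (1:ℝ))).add (tendsto_den R)).pow 2).div_const 2
    simpa using this
  have hle : ∀ᶠ M in atTop, r M ≤ g M := by
    apply Eventually.of_forall
    intro M
    have key := h M
    have hkey : 2 * ((X ∩ box2 M).ncard : ℝ) ≤ ((2*(M+R)+1 : ℕ):ℝ)^2 := by
      exact_mod_cast key
    have hgeq : g M = ((2*(M+R)+1 : ℕ):ℝ)^2 / (2 * (2*M+1)^2) := by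
      have h1 : ((2*(M+R)+1 : ℕ) : ℝ) = 2*(M:ℝ)+1 + 2*R := by push_cast; ring
      have h2 : (2*(M:ℝ)+1) ≠ 0 := by positivity
      simp only [hg]
      rw [h1]
      rw [show (1:ℝ) + 2*R/(2*M+1) = (2*(M:ℝ)+1 + 2*R)/(2*M+1) by field_simp]
      rw [div_pow, div_div, mul_comm ((2 * (M:ℝ) + 1) ^ 2) 2]
    rw [hgeq, hr]
    rw [div_le_div_iff₀ (by positivity) (by positivity)]
    nlinarith [hkey]
  have h1 : (1:ℝ)/2 = liminf g atTop := (hgt.liminf_eq).symm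
  rw [h1, ld]
  exact liminf_le_liminf hle (isBoundedUnder_of ⟨0, fun x => by positivity⟩)
    hgt.isBoundedUnder_le.isCoboundedUnder_ge

lemma density_nonneg (X : Set (ℤ × ℤ)) : 0 ≤ ld X := by
  rw [ld]
  apply le_liminf_of_le
  · exact (isBoundedUnder_of ⟨1, fun N => r_le_one X N⟩).isCoboundedUnder_ge
  · exact Eventually.of_forall fun N => by positivity

section construction
variable (w : ℤ × ℤ)

/-- Bézout functional: `φ n = n₁ p + n₂ q` with `φ w = gcd w₁ w₂`. -/
def phi2 (n : ℤ × ℤ) : ℤ := n.1 * Int.gcdA w.1 w.2 + n.2 * Int.gcdB w.1 w.2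

lemma phi2_w : phi2 w w = Int.gcd w.1 w.2 := (Int.gcd_eq_gcd_ab w.1 w.2).symm

lemma phi2_add_smul (n : ℤ × ℤ) (k : ℤ) : phi2 w (n + k • w) = phi2 w n + k * Int.gcd w.1 w.2 := by
  have := phi2_w w
  simp only [phi2, Prod.fst_add, Prod.snd_add, Prod.smul_fst, Prod.smul_snd, smul_eq_mul] at *
  linear_combination k * this

/-- The half-density shooting pattern. -/
def halfPat : Set (ℤ × ℤ) := {n | Even (phi2 w n / (Int.gcd w.1 w.2 : ℤ))}

lemma halfPat_hits (hw : w ≠ 0) {a : ℤ} (hoa : Odd a) : Hits2 (halfPat w) {0, a • w} := by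
  have hd : (0:ℤ) < (Int.gcd w.1 w.2 : ℤ) := by
    have : w.1 ≠ 0 ∨ w.2 ≠ 0 := by
      by_contra hc
      push_neg at hc
      exact hw (Prod.ext hc.1 hc.2)
    exact_mod_cast Int.gcd_pos_iff.mpr this
  intro n
  by_cases hn : Even (phi2 w n / (Int.gcd w.1 w.2 : ℤ))
  · exact ⟨0, Set.mem_insert _ _, by simpa [halfPat] using hn⟩
  · refine ⟨a • w, Set.mem_insert_of_mem _ rfl, ?_⟩
    show Even (phi2 w (n + a • w) / (Int.gcd w.1 w.2 : ℤ))
    rw [phi2_add_smul, Int.add_mul_ediv_right _ _ hd.ne']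
    exact (Int.not_even_iff_odd.mp hn).add_odd hoa

lemma halfPat_shift (hw : w ≠ 0) : ∀ y ∈ halfPat w, y + w ∈ (halfPat w)ᶜ := by
  have hd : (0:ℤ) < (Int.gcd w.1 w.2 : ℤ) := by
    have : w.1 ≠ 0 ∨ w.2 ≠ 0 := by
      by_contra hc
      push_neg at hc
      exact hw (Prod.ext hc.1 hc.2)
    exact_mod_cast Int.gcd_pos_iff.mpr this
  intro y hy
  simp only [halfPat, Set.mem_compl_iff, Set.mem_setOf_eq] at *
  have h1 : y + w = y + (1:ℤ) • w := by simp
  rw [h1, phi2_add_smul, Int.add_mul_ediv_right _ _ hd.ne']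
  simpa [Int.even_add_one] using hy
end construction

theorem stmt18 (w : ℤ × ℤ) (hw : w ≠ 0) (a b : ℤ) (ha : 0 < a) (hb : 0 < b)
    (hoa : Odd a) (hob : Odd b) (hcop : IsCoprime a b) :
    piercing2 {{0, a • w}, {0, b • w}} = 1 / 2 := by
  set F : Set (Set (ℤ × ℤ)) := {{0, a • w}, {0, b • w}} with hF
  have hX₀ : halfPat w ∈ {X | ∀ S ∈ F, Hits2 X S} := by
    intro S hS
    rcases hS with rfl | rfl
    · exact halfPat_hits w hw hoa
    · exact halfPat_hits w hw hob
  have hmem : lowerDensity2 (halfPat w) ∈ lowerDensity2 '' {X | ∀ S ∈ F, Hits2 X S} :=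
    ⟨_, hX₀, rfl⟩
  have hbdd : BddBelow (lowerDensity2 '' {X | ∀ S ∈ F, Hits2 X S}) := by
    refine ⟨0, ?_⟩
    rintro y ⟨X, -, rfl⟩
    rw [ld_eq]
    exact density_nonneg X
  apply le_antisymm
  · -- upper bound via the construction
    refine (csInf_le hbdd hmem).trans ?_
    rw [ld_eq]
    exact density_upper (R := max w.1.natAbs w.2.natAbs)
      (upper_count (le_max_left _ _) (le_max_right _ _) (halfPat_shift w hw))
  · -- lower bound: every hitting pattern has density ≥ 1/2
    apply le_csInf ⟨_, hmem⟩
    rintro y ⟨X, hX, rfl⟩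
    rw [ld_eq]
    have hhits : Hits2 X {0, a • w} := hX _ (Set.mem_insert _ _)
    exact density_lower (R := max (a • w).1.natAbs (a • w).2.natAbs)
      (lower_count (le_max_left _ _) (le_max_right _ _) hhits)
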